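/- Fix ρ, μ ∈ ℝ. The expected improvement EI(σ) = (ρ − μ)·Φ((ρ − μ)/σ) + σ·φ((ρ − μ)/σ), viewed as a function of the predictive standard deviation σ, is strictly monotonically increasing on (0, ∞). -/

import Mathlib

/-! Writing `a = ρ - μ`, the identities `Φ' = φ` and `φ'(z) = -z φ(z)` make the σ-derivative
of `a Φ(a/σ) + σ φ(a/σ)` collapse to `φ(a/σ) > 0`: the two terms carrying the factor
`a² / σ²` cancel. -/

open MeasureTheory

/-- The standard normal probability density function. -/
noncomputable def stdNormalPDF (z : ℝ) : ℝ := Real.exp (-z ^ 2 / 2) / Real.sqrt (2 * Real.pi)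

/-- The standard normal cumulative distribution function. -/
noncomputable def stdNormalCDF (z : ℝ) : ℝ := ∫ t in Set.Iic z, stdNormalPDF t

theorem hasDerivAt_integral_Iic {f : ℝ → ℝ} (hf : Continuous f) (hfi : Integrable f) (x : ℝ) :
    HasDerivAt (fun y => ∫ t in Set.Iic y, f t) (f x) x := by
  have hsplit : (fun y => ∫ t in Set.Iic y, f t) =
      fun y => (∫ t in Set.Iic 0, f t) + ∫ t in (0 : ℝ)..y, f t := by
    ext y
    rw [← intervalIntegral.integral_Iic_sub_Iic hfi.integrableOn hfi.integrableOn]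
    ring
  rw [hsplit]
  exact (intervalIntegral.integral_hasDerivAt_right hfi.intervalIntegrable
    (hf.stronglyMeasurableAtFilter _ _) hf.continuousAt).const_add _

theorem hasDerivAt_comp_div_mul_add {Φ φ : ℝ → ℝ} {a σ : ℝ} (hσ : σ ≠ 0)
    (hΦ : HasDerivAt Φ (φ (a / σ)) (a / σ))
    (hφ : HasDerivAt φ (-(a / σ) * φ (a / σ)) (a / σ)) :
    HasDerivAt (fun s => a * Φ (a / s) + s * φ (a / s)) (φ (a / σ)) σ := by
  have hdiv : HasDerivAt (fun s => a / s) (-a / σ ^ 2) σ := by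
    simpa [div_eq_mul_inv, neg_div] using (hasDerivAt_inv hσ).const_mul a
  refine (((hΦ.comp σ hdiv).const_mul a).add
    ((hasDerivAt_id σ).mul (hφ.comp σ hdiv))).congr_deriv ?_
  simp only [Function.comp_apply, id_eq]
  field_simp
  ring

theorem stdNormalPDF_pos (z : ℝ) : 0 < stdNormalPDF z := by
  unfold stdNormalPDF
  positivity

theorem continuous_stdNormalPDF : Continuous stdNormalPDF := by
  unfold stdNormalPDF
  fun_prop

theorem integrable_stdNormalPDF : Integrable stdNormalPDF := by
  convert (integrable_exp_neg_mul_sq (b := 1 / 2) (by norm_num)).div_const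
    (Real.sqrt (2 * Real.pi)) using 1
  ext z
  unfold stdNormalPDF
  ring_nf

theorem hasDerivAt_stdNormalCDF (z : ℝ) : HasDerivAt stdNormalCDF (stdNormalPDF z) z :=
  hasDerivAt_integral_Iic continuous_stdNormalPDF integrable_stdNormalPDF z

theorem hasDerivAt_stdNormalPDF (z : ℝ) : HasDerivAt stdNormalPDF (-z * stdNormalPDF z) z := by
  have hquad : HasDerivAt (fun y : ℝ => -y ^ 2 / 2) (-z) z :=
    ((hasDerivAt_pow 2 z).fun_neg.div_const 2).congr_deriv (by norm_num; ring)
  refine (hquad.exp.div_const (Real.sqrt (2 * Real.pi))).congr_deriv ?_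
  unfold stdNormalPDF
  ring

/-- The expected improvement `EI(σ) = (ρ - μ)·Φ((ρ - μ)/σ) + σ·φ((ρ - μ)/σ)`, as a function
of the predictive standard deviation σ, is strictly monotonically increasing on `(0, ∞)`. -/
theorem expected_improvement_strictMonoOn_sigma (ρ μ : ℝ) :
    StrictMonoOn
      (fun σ : ℝ => (ρ - μ) * stdNormalCDF ((ρ - μ) / σ) + σ * stdNormalPDF ((ρ - μ) / σ))
      (Set.Ioi (0 : ℝ)) := by
  have hderiv : ∀ σ ∈ Set.Ioi (0 : ℝ), HasDerivAt
      (fun σ : ℝ => (ρ - μ) * stdNormalCDF ((ρ - μ) / σ) + σ * stdNormalPDF ((ρ - μ) / σ))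
      (stdNormalPDF ((ρ - μ) / σ)) σ := fun σ hσ =>
    hasDerivAt_comp_div_mul_add (ne_of_gt hσ) (hasDerivAt_stdNormalCDF _)
      (hasDerivAt_stdNormalPDF _)
  refine strictMonoOn_of_hasDerivWithinAt_pos (f' := fun σ => stdNormalPDF ((ρ - μ) / σ))
    (convex_Ioi 0) (fun σ hσ => (hderiv σ hσ).continuousAt.continuousWithinAt)
    (fun σ hσ => ?_) (fun σ _ => stdNormalPDF_pos _)
  rw [interior_Ioi] at hσ ⊢
  exact (hderiv σ hσ).hasDerivWithinAt
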